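/- Let ν > 1 be real, a₀ > 0, m ≥ 2, and define w(0) = a₀, w(k) = k^{−ν} for k ≥ 1. Define S_m(n) = Σ_{k₁+⋯+k_m = n} w(k₁)⋯w(k_m), the sum over all m-tuples of nonnegative integers summing to n. Then for all n ≥ m, S_m(n) ≥ (a₀+1)^{m−1}·n^{−ν}. -/

import Mathlib

/-- Weighted power-law sequence: `w 0 = a₀`, `w k = k^(-ν)` for `k ≥ 1`. -/
noncomputable def plw (a₀ ν : ℝ) (k : ℕ) : ℝ :=
  if k = 0 then a₀ else (k : ℝ) ^ (-ν)

/-- `Sm m n`: the `m`-fold convolution of `plw a₀ ν`, i.e. the sum of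
`w k₁ ⋯ w k_m` over all `m`-tuples of naturals with `k₁ + ⋯ + k_m = n`. -/
noncomputable def Sm (a₀ ν : ℝ) (m n : ℕ) : ℝ :=
  ∑ k ∈ Finset.Nat.antidiagonalTuple m n, ∏ i : Fin m, plw a₀ ν (k i)

/-!
Splitting off the first factor exhibits `S_{m+1}` as the convolution of `w` with `S_m`. Keeping
only the terms `k₁ = 0` and `k₁ = 1` gives `S_{m+1}(n+1) ≥ a₀ S_m(n+1) + S_m(n)`, and since
`n^{-ν} ≥ (n+1)^{-ν}`, each step of the induction on `m` (starting from `S_1 = w`) gains the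
factor `a₀ + 1`.
-/

open Finset

theorem Finset.Nat.sum_antidiagonalTuple_succ {M : Type*} [AddCommMonoid M] {m : ℕ}
    (g : (Fin (m + 1) → ℕ) → M) (n : ℕ) :
    ∑ k ∈ Nat.antidiagonalTuple (m + 1) n, g k =
      ∑ p ∈ antidiagonal n, ∑ k ∈ Nat.antidiagonalTuple m p.2, g (Fin.cons p.1 k) := by
  rw [sum_sigma']
  refine (sum_bij' (fun x _ ↦ Fin.cons x.1.1 x.2) (fun k _ ↦ ⟨(k 0, n - k 0), Fin.tail k⟩)
    ?_ ?_ ?_ ?_ fun _ _ ↦ rfl).symm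
  · rintro ⟨⟨i, j⟩, k⟩ h
    simp_all [Nat.mem_antidiagonalTuple, Fin.sum_cons]
  · intro k hk
    simp only [Nat.mem_antidiagonalTuple, Fin.sum_univ_succ] at hk
    simp [Nat.mem_antidiagonalTuple, Fin.tail]
    omega
  · rintro ⟨⟨i, j⟩, k⟩ h
    simp only [mem_sigma, HasAntidiagonal.mem_antidiagonal] at h
    simp [← h.1]
  · intro k _
    simp

section

variable {a₀ ν : ℝ}

@[simp]
lemma plw_zero : plw a₀ ν 0 = a₀ := rfl

lemma plw_of_ne_zero {k : ℕ} (hk : k ≠ 0) : plw a₀ ν k = (k : ℝ) ^ (-ν) := if_neg hk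

@[simp]
lemma plw_one : plw a₀ ν 1 = 1 := by
  simp [plw_of_ne_zero]

lemma plw_nonneg (ha : 0 ≤ a₀) (k : ℕ) : 0 ≤ plw a₀ ν k := by
  unfold plw
  split_ifs
  exacts [ha, by positivity]

lemma Sm_nonneg (ha : 0 ≤ a₀) (m n : ℕ) : 0 ≤ Sm a₀ ν m n :=
  sum_nonneg fun _ _ ↦ prod_nonneg fun _ _ ↦ plw_nonneg ha _

lemma Sm_one (n : ℕ) : Sm a₀ ν 1 n = plw a₀ ν n := by
  simp [Sm]

lemma Sm_succ (m n : ℕ) :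
    Sm a₀ ν (m + 1) n = ∑ p ∈ antidiagonal n, plw a₀ ν p.1 * Sm a₀ ν m p.2 := by
  simp only [Sm, Nat.sum_antidiagonalTuple_succ, Fin.prod_univ_succ, Fin.cons_zero,
    Fin.cons_succ, mul_sum]

lemma mul_Sm_add_Sm_le_Sm_succ (ha : 0 ≤ a₀) (m n : ℕ) :
    a₀ * Sm a₀ ν m (n + 1) + Sm a₀ ν m n ≤ Sm a₀ ν (m + 1) (n + 1) := by
  rw [Sm_succ, Nat.sum_antidiagonal_succ, plw_zero]
  gcongr
  have hmem : ((0, n) : ℕ × ℕ) ∈ antidiagonal n := by simp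
  simpa using single_le_sum (f := fun p : ℕ × ℕ ↦ plw a₀ ν (p.1 + 1) * Sm a₀ ν m p.2)
    (fun p _ ↦ mul_nonneg (plw_nonneg ha _) (Sm_nonneg ha m p.2)) hmem

theorem pow_mul_rpow_neg_le_Sm_succ (ha : 0 ≤ a₀) (hν : 0 ≤ ν) (m : ℕ) {n : ℕ}
    (hn : m + 1 ≤ n) : (a₀ + 1) ^ m * (n : ℝ) ^ (-ν) ≤ Sm a₀ ν (m + 1) n := by
  induction m generalizing n with
  | zero => simp [Sm_one, plw_of_ne_zero (Nat.one_le_iff_ne_zero.mp hn)]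
  | succ m ih =>
    obtain ⟨n, rfl⟩ : ∃ k, n = k + 1 := ⟨n - 1, by omega⟩
    have hdecay : ((n + 1 : ℕ) : ℝ) ^ (-ν) ≤ (n : ℝ) ^ (-ν) :=
      Real.rpow_le_rpow_of_nonpos (by exact_mod_cast (by omega : 0 < n)) (by simp)
        (neg_nonpos.mpr hν)
    calc (a₀ + 1) ^ (m + 1) * ((n + 1 : ℕ) : ℝ) ^ (-ν)
        = a₀ * ((a₀ + 1) ^ m * ((n + 1 : ℕ) : ℝ) ^ (-ν))
          + (a₀ + 1) ^ m * ((n + 1 : ℕ) : ℝ) ^ (-ν) := by ring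
      _ ≤ a₀ * Sm a₀ ν (m + 1) (n + 1) + (a₀ + 1) ^ m * (n : ℝ) ^ (-ν) := by
          gcongr
          exact ih (by omega)
      _ ≤ a₀ * Sm a₀ ν (m + 1) (n + 1) + Sm a₀ ν (m + 1) n := by
          gcongr
          exact ih (by omega)
      _ ≤ Sm a₀ ν (m + 2) (n + 1) := mul_Sm_add_Sm_le_Sm_succ ha (m + 1) n

end

theorem Sm_lower_bound (ν a₀ : ℝ) (hν : 1 < ν) (ha : 0 < a₀) (m : ℕ) (hm : 2 ≤ m) :
    ∀ n : ℕ, m ≤ n → (a₀ + 1) ^ (m - 1) * (n : ℝ) ^ (-ν) ≤ Sm a₀ ν m n := by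
  obtain ⟨k, rfl⟩ : ∃ k, m = k + 1 := ⟨m - 1, by omega⟩
  intro n hn
  simpa using pow_mul_rpow_neg_le_Sm_succ ha.le (by linarith) k hn
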